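/- For an irrational x in (0,1), the condition lim_{j→∞} (log q_{j+1}(x))/q_j(x) = 0 holds if and only if lim_{j→∞} β_{j-1}(x)·log a_{j+1}(x) = 0, where q_j are the convergent denominators, a_j the partial quotients, and β_j(x)=∏_{i=0}^{j}G^i(x). -/

import Mathlib

open Filter Topology Finset

/-- Gauss map `G(y) = 1/y - ⌊1/y⌋`. -/
noncomputable def gauss (x : ℝ) : ℝ := Int.fract x⁻¹

/-- `pa x j` is the `j`-th continued fraction partial quotient `a_j(x) = ⌊1/G^{j-1}(x)⌋` (for `j ≥ 1`). -/
noncomputable def pa (x : ℝ) (j : ℕ) : ℤ := ⌊(gauss^[j-1] x)⁻¹⌋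

/-- `beta x j = β_j(x) = ∏_{i=0}^{j} G^i(x)`. -/
noncomputable def beta (x : ℝ) (j : ℕ) : ℝ := ∏ i ∈ Finset.range (j+1), gauss^[i] x

/-- Convergent denominators: `q_0 = 1`, `q_1 = a_1`, `q_j = a_j q_{j-1} + q_{j-2}`. -/
noncomputable def q (x : ℝ) : ℕ → ℤ
  | 0 => 1
  | 1 => pa x 1
  | (n+2) => pa x (n+2) * q x (n+1) + q x n

/-!
Write `Q = q_{j+1}` and `a = a_{j+2}`. The identity `β_j⁻¹ = q_{j+1} + q_j G^{j+1}(x)` gives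
`Q ≤ β_j⁻¹ ≤ 2Q`, and the recursion gives `a Q ≤ q_{j+2} ≤ 2 a Q`. Hence
`β_j log a ≤ log q_{j+2} / Q ≤ 2 β_j log a + log (2Q) / Q`, and the last term tends to `0`
because `q_j → ∞`.
-/

lemma tendsto_zero_iff_of_le_of_le_mul_add {L R E : ℕ → ℝ} {C : ℝ} (hR : 0 ≤ R)
    (hRL : R ≤ L) (hLR : ∀ j, L j ≤ C * R j + E j) (hE : Tendsto E atTop (𝓝 0)) :
    Tendsto L atTop (𝓝 0) ↔ Tendsto R atTop (𝓝 0) := by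
  refine ⟨fun hL => tendsto_of_tendsto_of_tendsto_of_le_of_le tendsto_const_nhds hL hR hRL,
    fun hRt => tendsto_of_tendsto_of_tendsto_of_le_of_le tendsto_const_nhds ?_ (hR.trans hRL) hLR⟩
  simpa using (hRt.const_smul C).add hE

lemma gauss_mem_Ioo {y : ℝ} (hy : Irrational y) : gauss y ∈ Set.Ioo 0 1 := by
  have hne : gauss y ≠ 0 := (hy.inv.sub_intCast ⌊y⁻¹⌋).ne_zero
  exact ⟨(Int.fract_nonneg _).lt_of_ne' hne, Int.fract_lt_one _⟩

lemma irrational_gauss_iterate {x : ℝ} (hirr : Irrational x) (j : ℕ) :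
    Irrational (gauss^[j] x) := by
  induction j with
  | zero => exact hirr
  | succ j ih =>
    rw [Function.iterate_succ_apply', gauss, Int.fract]
    exact ih.inv.sub_intCast _

lemma gauss_iterate_mem_Ioo {x : ℝ} (hx : x ∈ Set.Ioo 0 1) (hirr : Irrational x) (j : ℕ) :
    gauss^[j] x ∈ Set.Ioo 0 1 := by
  cases j with
  | zero => exact hx
  | succ j =>
    rw [Function.iterate_succ_apply']
    exact gauss_mem_Ioo (irrational_gauss_iterate hirr j)

lemma inv_gauss_iterate (x : ℝ) (j : ℕ) :
    (gauss^[j] x)⁻¹ = pa x (j+1) + gauss^[j+1] x := by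
  rw [Function.iterate_succ_apply', gauss, pa, Nat.add_sub_cancel, Int.floor_add_fract]

lemma q_add_two (x : ℝ) (j : ℕ) :
    (q x (j+2) : ℝ) = pa x (j+2) * q x (j+1) + q x j := by
  simp [q]

lemma beta_succ (x : ℝ) (j : ℕ) : beta x (j+1) = beta x j * gauss^[j+1] x :=
  prod_range_succ _ _

section

variable {x : ℝ}

lemma one_le_pa (hG : ∀ j, gauss^[j] x ∈ Set.Ioo 0 1) (j : ℕ) : 1 ≤ pa x (j+1) := by
  have h := hG j
  have h1 : (1:ℝ) ≤ (gauss^[j] x)⁻¹ := (one_le_inv₀ h.1).2 h.2.le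
  simpa [pa, Int.le_floor] using h1

lemma one_le_q (hG : ∀ j, gauss^[j] x ∈ Set.Ioo 0 1) (j : ℕ) : 1 ≤ q x j := by
  induction j using Nat.twoStepInduction with
  | zero => rfl
  | one => exact one_le_pa hG 0
  | more j ih0 ih1 =>
    show 1 ≤ pa x (j+2) * q x (j+1) + q x j
    nlinarith [one_le_pa hG (j+1)]

lemma q_add_one_le_q_add_two (hG : ∀ j, gauss^[j] x ∈ Set.Ioo 0 1) (j : ℕ) :
    q x (j+1) + 1 ≤ q x (j+2) := by
  show q x (j+1) + 1 ≤ pa x (j+2) * q x (j+1) + q x j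
  nlinarith [one_le_pa hG (j+1), one_le_q hG j, one_le_q hG (j+1)]

lemma q_le_q_succ (hG : ∀ j, gauss^[j] x ∈ Set.Ioo 0 1) (j : ℕ) : q x j ≤ q x (j+1) := by
  cases j with
  | zero => exact one_le_pa hG 0
  | succ j => linarith [q_add_one_le_q_add_two hG j]

lemma tendsto_q_atTop (hG : ∀ j, gauss^[j] x ∈ Set.Ioo 0 1) :
    Tendsto (fun j => (q x j : ℝ)) atTop atTop := by
  have hlin : ∀ j : ℕ, (j : ℤ) ≤ q x (j+1) := by
    intro j
    induction j with
    | zero => exact (one_le_q hG 1).trans' (by norm_num)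
    | succ j ih => push_cast; linarith [q_add_one_le_q_add_two hG j]
  rw [← tendsto_add_atTop_iff_nat 1]
  exact tendsto_atTop_mono (fun j => by exact_mod_cast hlin j) tendsto_natCast_atTop_atTop

lemma inv_beta (hG : ∀ j, gauss^[j] x ∈ Set.Ioo 0 1) (j : ℕ) :
    (beta x j)⁻¹ = q x (j+1) + q x j * gauss^[j+1] x := by
  induction j with
  | zero => simpa [beta, q] using inv_gauss_iterate x 0
  | succ j ih =>
    have hu : gauss^[j+1] x ≠ 0 := (hG (j+1)).1.ne'
    rw [beta_succ, mul_inv, ih, q_add_two, add_mul, mul_assoc, mul_inv_cancel₀ hu,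
      inv_gauss_iterate]
    ring

lemma q_le_inv_beta (hG : ∀ j, gauss^[j] x ∈ Set.Ioo 0 1) (j : ℕ) :
    (q x (j+1) : ℝ) ≤ (beta x j)⁻¹ := by
  have hq : (0:ℝ) ≤ q x j := by exact_mod_cast (one_le_q hG j).trans' zero_le_one
  rw [inv_beta hG]
  nlinarith [(hG (j+1)).1]

lemma inv_beta_le_two_mul_q (hG : ∀ j, gauss^[j] x ∈ Set.Ioo 0 1) (j : ℕ) :
    (beta x j)⁻¹ ≤ 2 * q x (j+1) := by
  have hq : (0:ℝ) ≤ q x j := by exact_mod_cast (one_le_q hG j).trans' zero_le_one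
  have hmono : (q x j : ℝ) ≤ q x (j+1) := by exact_mod_cast q_le_q_succ hG j
  rw [inv_beta hG]
  nlinarith [(hG (j+1)).2]

lemma pa_le_q (hG : ∀ j, gauss^[j] x ∈ Set.Ioo 0 1) (j : ℕ) :
    (pa x (j+2) : ℝ) ≤ q x (j+2) := by
  have ha : (1:ℝ) ≤ pa x (j+2) := by exact_mod_cast one_le_pa hG (j+1)
  have hq0 : (1:ℝ) ≤ q x j := by exact_mod_cast one_le_q hG j
  have hq1 : (1:ℝ) ≤ q x (j+1) := by exact_mod_cast one_le_q hG (j+1)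
  rw [q_add_two]
  nlinarith

lemma q_le_pa_mul_two_mul_q (hG : ∀ j, gauss^[j] x ∈ Set.Ioo 0 1) (j : ℕ) :
    (q x (j+2) : ℝ) ≤ pa x (j+2) * (2 * q x (j+1)) := by
  have ha : (1:ℝ) ≤ pa x (j+2) := by exact_mod_cast one_le_pa hG (j+1)
  have hmono : (q x j : ℝ) ≤ q x (j+1) := by exact_mod_cast q_le_q_succ hG j
  have hq0 : (1:ℝ) ≤ q x j := by exact_mod_cast one_le_q hG j
  rw [q_add_two]
  nlinarith

lemma beta_pos (hG : ∀ j, gauss^[j] x ∈ Set.Ioo 0 1) (j : ℕ) : 0 < beta x j :=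
  prod_pos fun i _ => (hG i).1

lemma beta_mul_log_pa_nonneg (hG : ∀ j, gauss^[j] x ∈ Set.Ioo 0 1) (j : ℕ) :
    0 ≤ beta x j * Real.log (pa x (j+2)) :=
  mul_nonneg (beta_pos hG j).le (Real.log_nonneg (by exact_mod_cast one_le_pa hG (j+1)))

lemma beta_mul_log_pa_le (hG : ∀ j, gauss^[j] x ∈ Set.Ioo 0 1) (j : ℕ) :
    beta x j * Real.log (pa x (j+2)) ≤ Real.log (q x (j+2)) / q x (j+1) := by
  have ha : (1:ℝ) ≤ pa x (j+2) := by exact_mod_cast one_le_pa hG (j+1)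
  have hq : (0:ℝ) < q x (j+1) := by exact_mod_cast one_le_q hG (j+1)
  calc beta x j * Real.log (pa x (j+2))
      = Real.log (pa x (j+2)) / (beta x j)⁻¹ := by rw [div_inv_eq_mul, mul_comm]
    _ ≤ Real.log (pa x (j+2)) / q x (j+1) :=
        div_le_div_of_nonneg_left (Real.log_nonneg ha) hq (q_le_inv_beta hG j)
    _ ≤ Real.log (q x (j+2)) / q x (j+1) :=
        div_le_div_of_nonneg_right (Real.log_le_log (by linarith) (pa_le_q hG j)) hq.le

lemma log_q_div_q_le (hG : ∀ j, gauss^[j] x ∈ Set.Ioo 0 1) (j : ℕ) :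
    Real.log (q x (j+2)) / q x (j+1) ≤
      2 * (beta x j * Real.log (pa x (j+2))) + Real.log (2 * q x (j+1)) / q x (j+1) := by
  have ha : (1:ℝ) ≤ pa x (j+2) := by exact_mod_cast one_le_pa hG (j+1)
  have hq : (0:ℝ) < q x (j+1) := by exact_mod_cast one_le_q hG (j+1)
  have hq2 : (0:ℝ) < q x (j+2) := by exact_mod_cast one_le_q hG (j+2)
  have hlog_pa : Real.log (pa x (j+2)) / q x (j+1) ≤ 2 * (beta x j * Real.log (pa x (j+2))) :=
    calc Real.log (pa x (j+2)) / q x (j+1) = 2 * (Real.log (pa x (j+2)) / (2 * q x (j+1))) := by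
          field_simp
      _ ≤ 2 * (Real.log (pa x (j+2)) / (beta x j)⁻¹) := by
          gcongr 2 * ?_
          exact div_le_div_of_nonneg_left (Real.log_nonneg ha) (inv_pos.2 (beta_pos hG j))
            (inv_beta_le_two_mul_q hG j)
      _ = 2 * (beta x j * Real.log (pa x (j+2))) := by rw [div_inv_eq_mul, mul_comm (Real.log _)]
  calc Real.log (q x (j+2)) / q x (j+1)
      ≤ Real.log (pa x (j+2) * (2 * q x (j+1))) / q x (j+1) := by
        gcongr
        exact q_le_pa_mul_two_mul_q hG j
    _ = Real.log (pa x (j+2)) / q x (j+1) + Real.log (2 * q x (j+1)) / q x (j+1) := by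
        rw [Real.log_mul (by positivity) (by positivity), add_div]
    _ ≤ _ := by gcongr

lemma tendsto_log_two_mul_q_div_q (hG : ∀ j, gauss^[j] x ∈ Set.Ioo 0 1) :
    Tendsto (fun j => Real.log (2 * q x (j+1)) / q x (j+1)) atTop (𝓝 0) := by
  have h2q : Tendsto (fun j => 2 * (q x (j+1) : ℝ)) atTop atTop :=
    ((tendsto_add_atTop_iff_nat 1).2 (tendsto_q_atTop hG)).const_mul_atTop two_pos
  have h := (Real.isLittleO_log_id_atTop.tendsto_div_nhds_zero.comp h2q).const_mul 2
  rw [mul_zero] at h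
  refine h.congr fun j => ?_
  have hq : (q x (j+1) : ℝ) ≠ 0 := by
    exact_mod_cast (one_le_q hG (j+1)).trans_lt' one_pos |>.ne'
  simp only [Function.comp_apply, id]
  field_simp

end

/-- `log q_{j+1}/q_j → 0` iff `β_{j-1} log a_{j+1} → 0`. -/
theorem stmt3 (x : ℝ) (hx : x ∈ Set.Ioo (0:ℝ) 1) (hirr : Irrational x) :
    Tendsto (fun j : ℕ => Real.log (q x (j+1)) / (q x j : ℝ)) atTop (nhds 0) ↔
      Tendsto (fun j : ℕ => beta x j * Real.log (pa x (j+2))) atTop (nhds 0) := by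
  have hG := gauss_iterate_mem_Ioo hx hirr
  rw [← tendsto_add_atTop_iff_nat 1]
  exact tendsto_zero_iff_of_le_of_le_mul_add (beta_mul_log_pa_nonneg hG) (beta_mul_log_pa_le hG)
    (log_q_div_q_le hG) (tendsto_log_two_mul_q_div_q hG)
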